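/- arXiv:2407.02134 — 2 statements merged into one kernel-verified Lean document; each statement's English description precedes it below -/
import Mathlib

section
/- Let M be a commutative idempotent monoid acting additively on an abelian group G, F : M → G a function satisfying the chain rule, and X_1, …, X_n ∈ M. Then the following are equivalent: (1) X_1, …, X_n form an F-Markov chain; (2) X_{[n]∖W}.F(;_{w∈W} X_w) = 0 for every nonempty W ⊆ [n] that does not consist only of consecutive integers (i.e. W is not an interval {i, i+1, …, k}). -/
/-!
Idempotence turns the chain rule into `X_B.F(X_S) = F(X_{B ∪ S}) - F(X_B)`, so every term
`X_Y.F(;_{v ∈ V} X_v)` is an inclusion–exclusion sum of values `F(X_S)` and multiplying it by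
`X_B` just enlarges `Y` to `B ∪ Y`. Both conditions of the theorem are equivalent to a global
Markov property: `X_t ⊥_F X_a | X_Z` whenever `Z` contains some `g` with `t < g < a`.
The Markov chain gives it by induction on `a - g`, using
`X_t ⊥ X_a | Z` ⟸ `X_t ⊥ X_{a-1} | Z`, `X_t ⊥ X_{a-1} | Z ∪ {a}` and `X_t ⊥ X_a | Z ∪ {a-1}`.
For a set `W` with a gap `t < g < a` (`t, a ∈ W`, `g ∉ W`), `X_{[n]∖W}.F(;W)` is a signed sum of
terms `X_Z.F(X_t; X_a)` with `g ∈ Z`; conversely, splitting off the indices outside `Z ∪ {t, a}`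
one at a time writes `X_Z.F(X_t; X_a)` as a sum of such terms `X_{[n]∖W}.F(;W)`.
-/

namespace AMRF
/-- An additive monoid action of a commutative monoid `M` on an abelian group `G`. -/
structure MAction (M G : Type*) [CommMonoid M] [AddCommGroup G] where
  act : M → G → G
  act_one : ∀ g, act 1 g = g
  act_mul : ∀ X Y g, act X (act Y g) = act (X * Y) g
  act_add : ∀ X g h, act X (g + h) = act X g + act X h

variable {M G : Type*} [CommMonoid M] [AddCommGroup G]

/-- `F : M → G` satisfies the chain rule `F(XY) = F(X) + X.F(Y)`. -/
def ChainRule (A : MAction M G) (F : M → G) : Prop :=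
  ∀ X Y : M, F (X * Y) = F X + A.act X (F Y)

/-- Higher-order terms on a *reversed* argument list: the head of the list is the *last*
argument `Y_q` in `F_q(Y₁; …; Y_q)`. -/
def Fseq (A : MAction M G) (F : M → G) : List M → G
  | [] => 0
  | [Y] => F Y
  | Y :: Z :: l => Fseq A F (Z :: l) - A.act Y (Fseq A F (Z :: l))

/-- `Fof A F [Y₁, …, Y_q] = F_q(Y₁; …; Y_q)`, defined inductively by
`F_q(Y₁; …; Y_q) = F_{q−1}(Y₁; …; Y_{q−1}) − Y_q.F_{q−1}(Y₁; …; Y_{q−1})`. -/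
def Fof (A : MAction M G) (F : M → G) (l : List M) : G :=
  Fseq A F l.reverse

/-- The interaction term `F(;_{i∈I} X_i)`, with arguments in increasing index order. -/
def Fint (A : MAction M G) (F : M → G) {ι : Type*} [LinearOrder ι] (X : ι → M)
    (I : Finset ι) : G :=
  Fof A F ((I.sort (· ≤ ·)).map X)

/-- The `F`-independence relation: `X ⊥_F Y | Z` iff `Z.F(X; Y) = 0`, where
`F(X; Y) = F(X) − Y.F(X)` is the second-order term. -/
def Findep (A : MAction M G) (F : M → G) (X Y Z : M) : Prop :=
  A.act Z (F X - A.act Y (F X)) = 0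

/-- `X₁, …, X_n` form an `F`-Markov chain: `Xᵢ ⊥_F X_{[i−2]} | X_{i−1}` for all `2 ≤ i ≤ n`
(with `0`-based indices: for consecutive `j + 1 = i`, `Xᵢ` is `F`-independent of the product
of all `X_k` with `k < j`, given `X_j`). -/
def FMarkovChain (A : MAction M G) (F : M → G) {n : ℕ} (X : Fin n → M) : Prop :=
  ∀ i j : Fin n, (j : ℕ) + 1 = (i : ℕ) →
    Findep A F (X i) (∏ k ∈ Finset.univ.filter (fun k => k < j), X k) (X j)

open Finset

section IdempotentProduct

variable {ι : Type*} [DecidableEq ι]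

lemma prod_mul_prod_of_subset (hidem : ∀ x : M, x * x = x) (X : ι → M) {S T : Finset ι}
    (hST : T ⊆ S) : (∏ a ∈ S, X a) * ∏ a ∈ T, X a = ∏ a ∈ S, X a := by
  rw [← prod_sdiff hST, mul_assoc, hidem]

lemma prod_union_of_idem (hidem : ∀ x : M, x * x = x) (X : ι → M) (S T : Finset ι) :
    ∏ a ∈ S ∪ T, X a = (∏ a ∈ S, X a) * ∏ a ∈ T, X a := by
  rw [← prod_union_inter, prod_mul_prod_of_subset hidem X
    (inter_subset_left.trans subset_union_left)]

end IdempotentProduct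

def MAction.actHom (A : MAction M G) (Z : M) : G →+ G :=
  AddMonoidHom.mk' (A.act Z) (A.act_add Z)

@[simp] lemma MAction.actHom_apply (A : MAction M G) (Z : M) (g : G) :
    A.actHom Z g = A.act Z g := rfl

namespace ChainRule

variable {A : MAction M G} {F : M → G}

lemma map_one (hF : ChainRule A F) : F 1 = 0 := by
  simpa [A.act_one] using hF 1 1

lemma act_prod {ι : Type*} [DecidableEq ι] (hidem : ∀ x : M, x * x = x) (hF : ChainRule A F)
    (X : ι → M) (B S : Finset ι) :
    A.act (∏ a ∈ B, X a) (F (∏ a ∈ S, X a)) = F (∏ a ∈ B ∪ S, X a) - F (∏ a ∈ B, X a) := by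
  rw [prod_union_of_idem hidem, hF, add_sub_cancel_left]

end ChainRule

section CondInteraction

variable {ι : Type*} [DecidableEq ι] (F : M → G) (X : ι → M)

/-- For nonempty `V` this is `X_Y.F(;_{v ∈ V} X_v)`, expanded by inclusion–exclusion
(`act_condInteraction`, `Fint_eq_condInteraction`). -/
def condInteraction (Y V : Finset ι) : G :=
  -∑ S ∈ V.powerset, ((-1 : ℤ) ^ #S) • F (∏ a ∈ Y ∪ S, X a)

variable {F X}

lemma condInteraction_empty (Y : Finset ι) :
    condInteraction F X Y ∅ = -F (∏ a ∈ Y, X a) := by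
  simp [condInteraction]

lemma condInteraction_insert {z : ι} {V : Finset ι} (hz : z ∉ V) (Y : Finset ι) :
    condInteraction F X Y (insert z V)
      = condInteraction F X Y V - condInteraction F X (Y ∪ {z}) V := by
  have hz_terms : ∑ S ∈ V.powerset, ((-1 : ℤ) ^ #(insert z S)) • F (∏ a ∈ Y ∪ insert z S, X a)
      = condInteraction F X (Y ∪ {z}) V := by
    rw [condInteraction, ← sum_neg_distrib]
    refine sum_congr rfl fun S hS => ?_
    rw [card_insert_of_notMem fun h => hz (mem_powerset.mp hS h), pow_succ, mul_neg_one,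
      neg_smul, union_insert, ← insert_union, ← union_singleton, union_right_comm]
  rw [← hz_terms, condInteraction, condInteraction, sum_powerset_insert hz]
  abel

lemma condInteraction_singleton (Y : Finset ι) (a : ι) :
    condInteraction F X Y {a} = F (∏ b ∈ Y ∪ {a}, X b) - F (∏ b ∈ Y, X b) := by
  conv_lhs => rw [← insert_empty_eq a]
  rw [condInteraction_insert (notMem_empty a), condInteraction_empty, condInteraction_empty,
    neg_sub_neg]

lemma condInteraction_eq_zero_of_mem {z : ι} {Y V : Finset ι} (hY : z ∈ Y) (hV : z ∈ V) :
    condInteraction F X Y V = 0 := by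
  rw [← insert_erase hV, condInteraction_insert (notMem_erase z V),
    union_eq_left.mpr (singleton_subset_iff.mpr hY), sub_self]

lemma condInteraction_pair_eq_zero_iff {t x : ι} (htx : t ≠ x) (Y : Finset ι) :
    condInteraction F X Y {t, x} = 0 ↔
      condInteraction F X (Y ∪ {x}) {t} = condInteraction F X Y {t} := by
  rw [pair_comm, condInteraction_insert (notMem_singleton.mpr htx.symm), sub_eq_zero, eq_comm]

variable {A : MAction M G}

lemma act_condInteraction (hidem : ∀ x : M, x * x = x) (hF : ChainRule A F) {V : Finset ι}
    (hV : V.Nonempty) (B Y : Finset ι) :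
    A.act (∏ a ∈ B, X a) (condInteraction F X Y V) = condInteraction F X (B ∪ Y) V := by
  rw [← A.actHom_apply, condInteraction, map_neg, map_sum]
  simp only [map_zsmul, MAction.actHom_apply, hF.act_prod hidem, smul_sub, sum_sub_distrib,
    ← sum_smul, sum_powerset_neg_one_pow_card_of_nonempty hV, zero_smul, sub_zero, union_assoc,
    condInteraction]

lemma findep_iff (hidem : ∀ x : M, x * x = x) (hF : ChainRule A F) (i j : ι) (L : Finset ι) :
    Findep A F (X i) (∏ k ∈ L, X k) (X j)
      ↔ condInteraction F X ({j} ∪ L) {i} = condInteraction F X {j} {i} := by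
  have hXi : F (X i) = condInteraction F X ∅ {i} := by
    rw [condInteraction_singleton, empty_union, prod_singleton, prod_empty, hF.map_one, sub_zero]
  have hXj : X j = ∏ a ∈ {j}, X a := prod_singleton X j |>.symm
  have hi : ({i} : Finset ι).Nonempty := singleton_nonempty i
  rw [Findep, hXi, act_condInteraction hidem hF hi, union_empty, ← A.actHom_apply, map_sub,
    MAction.actHom_apply, MAction.actHom_apply, hXj, act_condInteraction hidem hF hi,
    act_condInteraction hidem hF hi, union_empty, sub_eq_zero, eq_comm]

end CondInteraction

section Fint

lemma Fof_append_singleton (A : MAction M G) (F : M → G) {l : List M} (hl : l ≠ []) (Y : M) :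
    Fof A F (l ++ [Y]) = Fof A F l - A.act Y (Fof A F l) := by
  obtain ⟨Z, l', h⟩ := List.exists_cons_of_ne_nil (List.reverse_ne_nil_iff.mpr hl)
  simp only [Fof, List.reverse_append, h]
  rfl

variable {ι : Type*} [LinearOrder ι] [DecidableEq ι]

lemma sort_insert_of_forall_lt {a : ι} {s : Finset ι} (h : ∀ x ∈ s, x < a) :
    (insert a s).sort (· ≤ ·) = s.sort (· ≤ ·) ++ [a] := by
  have ha : a ∉ s := fun has => lt_irrefl a (h a has)
  have hl : (s.sort (· ≤ ·) ++ [a]).toFinset = insert a s := by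
    ext x; simp
  rw [← hl, List.toFinset_sort]
  · simpa [List.pairwise_append, pairwise_sort] using fun x hx => (h x hx).le
  · simpa [List.nodup_append, sort_nodup] using ha

lemma Fint_eq_condInteraction {A : MAction M G} {F : M → G} (hidem : ∀ x : M, x * x = x)
    (hF : ChainRule A F) (X : ι → M) (W : Finset ι) :
    Fint A F X W = condInteraction F X ∅ W := by
  induction W using induction_on_max with
  | empty => simp [Fint, Fof, Fseq, condInteraction_empty, hF.map_one]
  | insert a I hlt ih =>
    have ha : a ∉ I := fun h => lt_irrefl a (hlt a h)
    have hsort := sort_insert_of_forall_lt hlt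
    rcases I.eq_empty_or_nonempty with rfl | hI
    · simp [Fint, Fof, Fseq, condInteraction_singleton, hF.map_one]
    · have hl : (I.sort (· ≤ ·)).map X ≠ [] := List.ne_nil_of_length_pos (by simp [hI.card_pos])
      rw [Fint, hsort, List.map_append, List.map_singleton, Fof_append_singleton A F hl, ← Fint,
        ih, condInteraction_insert ha, empty_union, ← prod_singleton X a,
        act_condInteraction hidem hF hI, union_empty]

end Fint

section Expansion

variable {ι : Type*} [DecidableEq ι] {F : M → G} {X : ι → M}

lemma condInteraction_union_eq_of_forall {Y₀ B V : Finset ι}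
    (h : ∀ Y, Y₀ ⊆ Y → ∀ x ∈ B, condInteraction F X (Y ∪ {x}) V = condInteraction F X Y V) :
    condInteraction F X (Y₀ ∪ B) V = condInteraction F X Y₀ V := by
  induction B using Finset.induction_on with
  | empty => rw [union_empty]
  | insert x B _ ih =>
    rw [union_insert, ← union_singleton, h _ subset_union_left x (mem_insert_self x B),
      ih fun Y hY y hy => h Y hY y (mem_insert_of_mem hy)]

lemma condInteraction_eq_zero_of_forall_superset {Y U V : Finset ι}
    (h : ∀ Z, Y ⊆ Z → condInteraction F X Z U = 0) (hUV : U ⊆ V) :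
    condInteraction F X Y V = 0 := by
  suffices ∀ R Y, (∀ Z, Y ⊆ Z → condInteraction F X Z U = 0) →
      condInteraction F X Y (U ∪ R) = 0 by
    simpa [union_eq_right.mpr hUV] using this V Y h
  intro R
  induction R using Finset.induction_on with
  | empty => exact fun Y h => by simpa using h Y subset_rfl
  | insert z R _ ih =>
    intro Y h
    rw [union_insert]
    by_cases hz : z ∈ U ∪ R
    · rw [insert_eq_of_mem hz]
      exact ih Y h
    · rw [condInteraction_insert hz, ih Y h,
        ih (Y ∪ {z}) fun Z hZ => h Z (subset_union_left.trans hZ), sub_zero]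

lemma condInteraction_eq_zero_of_forall_compl [Fintype ι] {Y V : Finset ι}
    (h : ∀ W, V ⊆ W → Disjoint W Y → condInteraction F X (univ \ W) W = 0) :
    condInteraction F X Y V = 0 := by
  suffices ∀ D : Finset ι, ∀ Y V, (∀ W, V ⊆ W → Disjoint W Y →
      condInteraction F X (univ \ W) W = 0) → (∀ x, x ∈ Y ∨ x ∈ V ∨ x ∈ D) →
      condInteraction F X Y V = 0 from
    this univ Y V h fun x => Or.inr (Or.inr (mem_univ x))
  intro D
  induction D using Finset.induction_on with
  | empty =>
    intro Y V h hcov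
    by_cases hYV : Disjoint Y V
    · have hY : Y = univ \ V := by
        have hcov' : Y ∪ V = univ := eq_univ_iff_forall.mpr fun x => by simpa using hcov x
        rw [← union_sdiff_cancel_right hYV, hcov']
      rw [hY]
      exact h V subset_rfl hYV.symm
    · obtain ⟨z, hzY, hzV⟩ := not_disjoint_iff.mp hYV
      exact condInteraction_eq_zero_of_mem hzY hzV
  | insert z D _ ih =>
    intro Y V h hcov
    by_cases hz : z ∈ Y ∨ z ∈ V
    · refine ih Y V h fun x => ?_
      have := hcov x
      simp only [mem_insert] at this
      rcases this with hx | hx | rfl | hx <;> tauto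
    · have hzV : z ∉ V := fun hzV => hz (Or.inr hzV)
      have hsplit := condInteraction_insert (F := F) (X := X) hzV Y
      rw [ih Y (insert z V) (fun W hW => h W ((subset_insert z V).trans hW)) fun x => ?_,
        ih (Y ∪ {z}) V (fun W hW hWY => h W hW (hWY.mono_right subset_union_left)) fun x => ?_,
        sub_zero] at hsplit
      · exact hsplit.symm
      all_goals
        have := hcov x
        simp only [mem_insert, mem_union, mem_singleton] at this ⊢
        tauto

end Expansion

lemma coe_ordConnected_iff {ι : Type*} [Preorder ι] (W : Finset ι) :
    (W : Set ι).OrdConnected ↔ ∀ a ∈ W, ∀ b ∈ W, ∀ c, a ≤ c → c ≤ b → c ∈ W :=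
  ⟨fun h _ ha _ hb _ hac hcb => h.out ha hb ⟨hac, hcb⟩,
    fun h => ⟨fun a ha b hb c hc => h a ha b hb c hc.1 hc.2⟩⟩

section GlobalMarkov

variable {ι : Type*} [LinearOrder ι] [DecidableEq ι]

/-- `X_t ⊥_F X_a | X_Z` whenever `Z` contains an index strictly between `t` and `a`. -/
def GlobalMarkov (F : M → G) (X : ι → M) : Prop :=
  ∀ ⦃t g a : ι⦄, t < g → g < a → ∀ Z : Finset ι, g ∈ Z → condInteraction F X Z {t, a} = 0

lemma globalMarkov_iff_forall_not_ordConnected [Fintype ι] {F : M → G} {X : ι → M} :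
    GlobalMarkov F X ↔ ∀ W : Finset ι, ¬ (W : Set ι).OrdConnected →
      condInteraction F X (univ \ W) W = 0 := by
  constructor
  · intro hG W hW
    simp only [Set.ordConnected_def, not_forall, Set.not_subset, Set.mem_Icc, mem_coe] at hW
    obtain ⟨a, ha, b, hb, c, ⟨hac, hcb⟩, hc⟩ := hW
    have hac' : a < c := lt_of_le_of_ne hac (by rintro rfl; exact hc ha)
    have hcb' : c < b := lt_of_le_of_ne hcb (by rintro rfl; exact hc hb)
    exact condInteraction_eq_zero_of_forall_superset
      (fun Z hZ => hG hac' hcb' Z (hZ (mem_sdiff.mpr ⟨mem_univ c, hc⟩)))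
      (insert_subset_iff.mpr ⟨ha, singleton_subset_iff.mpr hb⟩)
  · intro h t g a htg hga Z hgZ
    refine condInteraction_eq_zero_of_forall_compl fun W hW hWZ => h W fun hconn => ?_
    have hgW : g ∈ W := hconn.out (hW (mem_insert_self t {a}))
      (hW (mem_insert_of_mem (mem_singleton_self a))) ⟨htg.le, hga.le⟩
    exact disjoint_left.mp hWZ hgW hgZ

end GlobalMarkov


section MarkovChain

variable {A : MAction M G} {F : M → G} {n : ℕ} {X : Fin n → M}

lemma FMarkovChain.condInteraction_pair_eq_zero_of_succ (hidem : ∀ x : M, x * x = x)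
    (hF : ChainRule A F) (hM : FMarkovChain A F X) {t g a : Fin n} (htg : t < g)
    (hga : (g : ℕ) + 1 = a) {Z : Finset (Fin n)} (hgZ : g ∈ Z) :
    condInteraction F X Z {t, a} = 0 := by
  set L := univ.filter (· < g)
  have hmarkov := (findep_iff hidem hF a g L).mp (hM a g hga)
  have ha : ({a} : Finset (Fin n)).Nonempty := singleton_nonempty a
  have hL : ∀ Y, g ∈ Y → condInteraction F X (Y ∪ L) {a} = condInteraction F X Y {a} := by
    intro Y hgY
    have hYg : Y ∪ {g} = Y := union_eq_left.mpr (singleton_subset_iff.mpr hgY)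
    calc condInteraction F X (Y ∪ L) {a}
        = condInteraction F X (Y ∪ ({g} ∪ L)) {a} := by rw [← union_assoc, hYg]
      _ = A.act (∏ b ∈ Y, X b) (condInteraction F X ({g} ∪ L) {a}) :=
        (act_condInteraction hidem hF ha Y _).symm
      _ = condInteraction F X Y {a} := by
        rw [hmarkov, act_condInteraction hidem hF ha, hYg]
  have htL : t ∈ L := by simpa [L] using htg
  have hta : t < a := htg.trans (Fin.lt_def.mpr (by omega))
  rw [pair_comm, condInteraction_pair_eq_zero_iff hta.ne']
  calc condInteraction F X (Z ∪ {t}) {a}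
      = condInteraction F X (Z ∪ {t} ∪ L) {a} := (hL _ (mem_union_left _ hgZ)).symm
    _ = condInteraction F X (Z ∪ L) {a} := by
      rw [union_assoc, singleton_union, insert_eq_of_mem htL]
    _ = condInteraction F X Z {a} := hL Z hgZ

lemma FMarkovChain.globalMarkov (hidem : ∀ x : M, x * x = x) (hF : ChainRule A F)
    (hM : FMarkovChain A F X) : GlobalMarkov F X := by
  intro t g a htg hga
  obtain ⟨k, hk⟩ : ∃ k, (g : ℕ) + 1 + k = a := ⟨a - (g + 1), by rw [Fin.lt_def] at hga; omega⟩
  induction k generalizing a with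
  | zero => exact fun Z hgZ => hM.condInteraction_pair_eq_zero_of_succ hidem hF htg hk hgZ
  | succ k ih =>
    intro Z hgZ
    set a' : Fin n := ⟨g + 1 + k, by omega⟩
    have hga' : g < a' := Fin.lt_def.mpr (by simp [a']; omega)
    have hta' : t < a' := htg.trans hga'
    have hta : t < a := htg.trans hga
    have h1 := (condInteraction_pair_eq_zero_iff hta'.ne Z).mp (ih hga' rfl Z hgZ)
    have h2 := (condInteraction_pair_eq_zero_iff hta'.ne (Z ∪ {a})).mp
      (ih hga' rfl (Z ∪ {a}) (mem_union_left _ hgZ))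
    have h3 := (condInteraction_pair_eq_zero_iff hta.ne (Z ∪ {a'})).mp
      (hM.condInteraction_pair_eq_zero_of_succ hidem hF hta' (by simp [a']; omega)
        (mem_union_right _ (mem_singleton_self a')))
    rw [condInteraction_pair_eq_zero_iff hta.ne, ← h2, union_right_comm, h3, h1]

lemma GlobalMarkov.fMarkovChain (hidem : ∀ x : M, x * x = x) (hF : ChainRule A F)
    (hG : GlobalMarkov F X) : FMarkovChain A F X := by
  intro i j hji
  have hji' : j < i := Fin.lt_def.mpr (by omega)
  rw [findep_iff hidem hF]
  refine condInteraction_union_eq_of_forall fun Y hjY x hx => ?_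
  have hxj : x < j := by simpa using hx
  rw [← condInteraction_pair_eq_zero_iff (hxj.trans hji').ne', pair_comm]
  exact hG hxj hji' Y (hjY (mem_singleton_self j))

lemma fMarkovChain_iff_globalMarkov (hidem : ∀ x : M, x * x = x) (hF : ChainRule A F) :
    FMarkovChain A F X ↔ GlobalMarkov F X :=
  ⟨FMarkovChain.globalMarkov hidem hF, GlobalMarkov.fMarkovChain hidem hF⟩

end MarkovChain

/-- `X₁, …, X_n` form an `F`-Markov chain if and only if
`X_{[n]∖W}.F(;_{w∈W} X_w) = 0` for every nonempty `W ⊆ [n]` that is not an interval of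
consecutive numbers. -/
theorem F_markov_chain_characterization
    {M G : Type*} [CommMonoid M] [AddCommGroup G]
    (hidem : ∀ x : M, x * x = x)
    (A : MAction M G) (F : M → G) (hF : ChainRule A F)
    (n : ℕ) (X : Fin n → M) :
    FMarkovChain A F X ↔
      ∀ W : Finset (Fin n), W.Nonempty →
        ¬ (∀ a ∈ W, ∀ b ∈ W, ∀ c : Fin n, a ≤ c → c ≤ b → c ∈ W) →
        A.act (∏ a ∈ Finset.univ \ W, X a) (Fint A F X W) = 0 := by
  rw [fMarkovChain_iff_globalMarkov hidem hF, globalMarkov_iff_forall_not_ordConnected]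
  refine forall_congr' fun W => ?_
  rw [coe_ordConnected_iff]
  rcases W.eq_empty_or_nonempty with rfl | hW
  · simp
  · rw [Fint_eq_condInteraction hidem hF, act_condInteraction hidem hF hW, union_empty]
    exact ⟨fun h _ => h, fun h => h hW⟩

end AMRF
end

section
/- Let M be a bounded commutative idempotent monoid with top element ⊤, acting additively on an abelian group G. Define Φ : CRS(M, G) → G^⊤ by Φ(F) = F(⊤), and Ψ : G^⊤ → CRS(M, G) by [Ψ(g)](X) = g − X.g. Then Φ and Ψ are well-defined (i.e. F(⊤) ∈ G^⊤ for every F ∈ CRS(M, G), and Ψ(g) satisfies the chain rule for every g ∈ G^⊤) and are mutually inverse module isomorphisms: both are additive, both commute with the M-actions, and Φ ∘ Ψ and Ψ ∘ Φ are the identities. -/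
/-!
A chain-rule function is determined by its value at `⊤`: from `X⊤ = ⊤` the chain rule gives
`F(⊤) = F(X) + X.F(⊤)`, i.e. `F = Ψ(F(⊤))`; and `⊤⊤ = ⊤` gives `⊤.F(⊤) = 0`. Conversely
`X ↦ g − X.g` satisfies the chain rule for every `g`, as the sum telescopes.
-/

namespace AMRF
variable {M G : Type*} [CommMonoid M] [AddCommGroup G]

namespace MAction

variable (A : MAction M G)

theorem act_sub (X : M) (g h : G) : A.act X (g - h) = A.act X g - A.act X h :=
  (AddMonoidHom.mk' (A.act X) (A.act_add X)).map_sub g h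

theorem act_comm (X Y : M) (g : G) : A.act X (A.act Y g) = A.act Y (A.act X g) := by
  rw [A.act_mul, A.act_mul, mul_comm]

end MAction

variable {A : MAction M G} {F : M → G}

theorem chainRule_sub_act (A : MAction M G) (g : G) : ChainRule A (fun X => g - A.act X g) := by
  intro X Y
  beta_reduce
  rw [A.act_sub, A.act_mul]
  abel

theorem ChainRule.act_apply_eq_zero_of_mul_self (hF : ChainRule A F) {X : M} (hX : X * X = X) :
    A.act X (F X) = 0 := by
  have h := hF X X
  rw [hX] at h
  exact left_eq_add.mp h

theorem ChainRule.sub_act_apply_eq_of_mul_eq (hF : ChainRule A F) {X T : M} (hXT : X * T = T) :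
    F T - A.act X (F T) = F X := by
  have h := hF X T
  rw [hXT] at h
  exact sub_eq_of_eq_add h

theorem chain_rule_classification_general
    {M G : Type*} [CommMonoid M] [AddCommGroup G]
    (A : MAction M G)
    (top : M) (htop : ∀ x : M, x * top = top) :
    -- Φ is well-defined: F(⊤) is annihilated by ⊤
    (∀ F : M → G, ChainRule A F → A.act top (F top) = 0) ∧
    -- Ψ is well-defined: Ψ(g) satisfies the chain rule
    (∀ g : G, A.act top g = 0 → ChainRule A (fun x => g - A.act x g)) ∧
    -- Φ is additive
    (∀ F F' : M → G, ChainRule A F → ChainRule A F' →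
      (fun x => F x + F' x) top = F top + F' top) ∧
    -- Φ commutes with the M-actions: Φ(X.F) = X.Φ(F)
    (∀ (x : M) (F : M → G), ChainRule A F →
      (fun y => A.act x (F y)) top = A.act x (F top)) ∧
    -- Ψ is additive: Ψ(g + h) = Ψ(g) + Ψ(h)
    (∀ g h : G, A.act top g = 0 → A.act top h = 0 →
      (fun x : M => (g + h) - A.act x (g + h)) =
        fun x : M => (g - A.act x g) + (h - A.act x h)) ∧
    -- Ψ commutes with the M-actions: Ψ(X.g) = X.Ψ(g)
    (∀ (x : M) (g : G), A.act top g = 0 →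
      (fun y : M => A.act x g - A.act y (A.act x g)) =
        fun y : M => A.act x (g - A.act y g)) ∧
    -- Φ ∘ Ψ = id on G^⊤
    (∀ g : G, A.act top g = 0 → g - A.act top g = g) ∧
    -- Ψ ∘ Φ = id on CRS(M, G)
    (∀ F : M → G, ChainRule A F → ∀ x : M, F top - A.act x (F top) = F x) := by
  refine ⟨fun F hF => hF.act_apply_eq_zero_of_mul_self (htop top), fun g _ => chainRule_sub_act A g,
    fun _ _ _ _ => rfl, fun _ _ _ => rfl, fun g h _ _ => ?_, fun x g _ => ?_, fun g hg => ?_,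
    fun F hF x => hF.sub_act_apply_eq_of_mul_eq (htop x)⟩
  · funext x
    rw [A.act_add]
    abel
  · funext y
    rw [A.act_sub, A.act_comm]
  · rw [hg, sub_zero]

/-- Let `M` be a bounded commutative idempotent monoid with top element
`⊤` (i.e. `X·⊤ = ⊤` for all `X`), acting additively on the abelian group `G`. Consider
`Φ(F) = F(⊤)` on chain-rule functions and `Ψ(g) = fun X => g − X.g` on `G^⊤ = {g : ⊤.g = 0}`.
Then: `Φ` lands in `G^⊤`; `Ψ(g)` satisfies the chain rule; `Φ` and `Ψ` are additive and
commute with the `M`-actions; and `Φ ∘ Ψ` and `Ψ ∘ Φ` are the identities. -/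
theorem chain_rule_classification
    {M G : Type*} [CommMonoid M] [AddCommGroup G]
    (hidem : ∀ x : M, x * x = x)
    (A : MAction M G)
    (top : M) (htop : ∀ x : M, x * top = top) :
    -- Φ is well-defined: F(⊤) is annihilated by ⊤
    (∀ F : M → G, ChainRule A F → A.act top (F top) = 0) ∧
    -- Ψ is well-defined: Ψ(g) satisfies the chain rule
    (∀ g : G, A.act top g = 0 → ChainRule A (fun x => g - A.act x g)) ∧
    -- Φ is additive
    (∀ F F' : M → G, ChainRule A F → ChainRule A F' →
      (fun x => F x + F' x) top = F top + F' top) ∧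
    -- Φ commutes with the M-actions: Φ(X.F) = X.Φ(F)
    (∀ (x : M) (F : M → G), ChainRule A F →
      (fun y => A.act x (F y)) top = A.act x (F top)) ∧
    -- Ψ is additive: Ψ(g + h) = Ψ(g) + Ψ(h)
    (∀ g h : G, A.act top g = 0 → A.act top h = 0 →
      (fun x : M => (g + h) - A.act x (g + h)) =
        fun x : M => (g - A.act x g) + (h - A.act x h)) ∧
    -- Ψ commutes with the M-actions: Ψ(X.g) = X.Ψ(g)
    (∀ (x : M) (g : G), A.act top g = 0 →
      (fun y : M => A.act x g - A.act y (A.act x g)) =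
        fun y : M => A.act x (g - A.act y g)) ∧
    -- Φ ∘ Ψ = id on G^⊤
    (∀ g : G, A.act top g = 0 → g - A.act top g = g) ∧
    -- Ψ ∘ Φ = id on CRS(M, G)
    (∀ F : M → G, ChainRule A F → ∀ x : M, F top - A.act x (F top) = F x) :=
  chain_rule_classification_general A top htop

end AMRF
end
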